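/- arXiv:2104.05613 — 2 statements merged into one kernel-verified Lean document; each statement's English description precedes it below -/
import Mathlib

section
/- Let υ ∈ (0, 1], κ ∈ [0, υ), C ≥ 0, and let Δs be a natural number with (1 + Δs)^υ ≥ 2. Let a : ℕ → ℝ be a sequence of nonnegative reals such that a(1) ≤ C·(1 + Δs)^{κ − υ} and, for every t ≥ 1, a(t+1) ≤ (1 − 2·(t + Δs)^{−υ})·a(t) + C·(t + Δs)^{κ − 2υ}. Then for every t ≥ 1, a(t) ≤ C·(t + Δs)^{κ − υ}; in particular a(t) ≤ C·t^{κ − υ} for all t ≥ 1. -/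
lemma sgd_key (υ κ : ℝ) (hυ0 : 0 < υ) (hυ1 : υ ≤ 1) (hκ0 : 0 ≤ κ) (hκ : κ < υ)
    (s : ℝ) (hs : 1 ≤ s) (hs2 : (2 : ℝ) ≤ s ^ υ) :
    s ^ (κ - υ) - s ^ (κ - 2 * υ) ≤ (s + 1) ^ (κ - υ) := by
  have hspos : (0 : ℝ) < s := lt_of_lt_of_le one_pos hs
  have hb : (0 : ℝ) < 1 + 1 / s := by positivity
  have hb1 : (1 : ℝ) ≤ 1 + 1 / s := by
    have : 0 < 1 / s := by positivity
    linarith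
  have hsplit : s + 1 = s * (1 + 1 / s) := by field_simp
  have hmul : (s + 1) ^ (κ - υ) = s ^ (κ - υ) * (1 + 1 / s) ^ (κ - υ) := by
    rw [hsplit, Real.mul_rpow hspos.le hb.le]
  have hsub : s ^ (κ - 2 * υ) = s ^ (κ - υ) * s ^ (-υ) := by
    rw [← Real.rpow_add hspos]; ring_nf
  -- key scalar inequality: 1 - s^{-υ} ≤ (1+1/s)^{κ-υ}
  set B : ℝ := (1 + 1 / s) ^ (υ - κ) with hB
  have hBpos : 0 < B := Real.rpow_pos_of_pos hb _
  have hBle : B ≤ 1 + 1 / s := by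
    calc B ≤ (1 + 1 / s) ^ (1 : ℝ) :=
          Real.rpow_le_rpow_of_exponent_le hb1 (by linarith)
      _ = 1 + 1 / s := Real.rpow_one _
  have hinv : s ^ (-υ) = (s ^ υ)⁻¹ := by rw [Real.rpow_neg hspos.le]
  have hsu_le : s ^ υ ≤ s := by
    have := Real.rpow_le_rpow_of_exponent_le hs hυ1
    simpa [Real.rpow_one] using this
  have hsu_pos : 0 < s ^ υ := Real.rpow_pos_of_pos hspos _
  have h1s : 1 / s ≤ s ^ (-υ) := by
    rw [hinv, one_div]
    exact inv_anti₀ hsu_pos hsu_le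
  have hhalf : s ^ (-υ) ≤ 1 / 2 := by
    rw [hinv]
    rw [inv_le_comm₀ hsu_pos (by norm_num)] at *
    linarith
  have hprod : (1 - s ^ (-υ)) * B ≤ 1 := by
    have h1 : 1 - s ^ (-υ) ≤ 1 - 1 / s := by linarith
    have h2 : (1 - s ^ (-υ)) * B ≤ (1 - 1 / s) * (1 + 1 / s) :=
      mul_le_mul h1 hBle hBpos.le (by
        have : 1 / s ≤ 1 := by
          rw [div_le_one hspos]; exact hs
        linarith)
    have h3 : (1 - 1 / s) * (1 + 1 / s) ≤ 1 := by
      have : 0 ≤ (1 / s) ^ 2 := sq_nonneg _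
      nlinarith
    linarith
  have hkey : 1 - s ^ (-υ) ≤ (1 + 1 / s) ^ (κ - υ) := by
    have : (1 + 1 / s) ^ (κ - υ) = B⁻¹ := by
      rw [hB, ← Real.rpow_neg hb.le]; ring_nf
    rw [this, inv_eq_one_div, le_div_iff₀ hBpos]
    exact hprod
  have hsk : 0 < s ^ (κ - υ) := Real.rpow_pos_of_pos hspos _
  calc s ^ (κ - υ) - s ^ (κ - 2 * υ) = s ^ (κ - υ) * (1 - s ^ (-υ)) := by
        rw [hsub]; ring
    _ ≤ s ^ (κ - υ) * (1 + 1 / s) ^ (κ - υ) := by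
        exact mul_le_mul_of_nonneg_left hkey hsk.le
    _ = (s + 1) ^ (κ - υ) := hmul.symm

/-- The deterministic recurrence at the heart of the SGD-SCB convergence lemma:
if `a(1) ≤ C(1+Δs)^{κ−υ}` and
`a(t+1) ≤ (1 − 2(t+Δs)^{−υ}) a(t) + C(t+Δs)^{κ−2υ}`, then `a(t) ≤ C(t+Δs)^{κ−υ}`,
and in particular `a(t) ≤ C t^{κ−υ}`. -/
theorem sgd_scb_recurrence
    (υ κ C : ℝ) (hυ0 : 0 < υ) (hυ1 : υ ≤ 1) (hκ0 : 0 ≤ κ) (hκ : κ < υ) (hC : 0 ≤ C)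
    (Δs : ℕ) (hΔs : (2 : ℝ) ≤ (1 + (Δs : ℝ)) ^ υ)
    (a : ℕ → ℝ) (ha0 : ∀ t, 0 ≤ a t)
    (ha1 : a 1 ≤ C * (1 + (Δs : ℝ)) ^ (κ - υ))
    (hrec : ∀ t, 1 ≤ t →
      a (t + 1) ≤ (1 - 2 * ((t : ℝ) + (Δs : ℝ)) ^ (-υ)) * a t
        + C * ((t : ℝ) + (Δs : ℝ)) ^ (κ - 2 * υ)) :
    (∀ t, 1 ≤ t → a t ≤ C * ((t : ℝ) + (Δs : ℝ)) ^ (κ - υ)) ∧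
    (∀ t, 1 ≤ t → a t ≤ C * (t : ℝ) ^ (κ - υ)) := by
  have main : ∀ t, 1 ≤ t → a t ≤ C * ((t : ℝ) + (Δs : ℝ)) ^ (κ - υ) := by
    intro t ht
    induction t, ht using Nat.le_induction with
    | base => simpa using ha1
    | succ t ht IH =>
      set s : ℝ := (t : ℝ) + (Δs : ℝ) with hsdef
      have hs1 : (1 : ℝ) ≤ s := by
        have : (1 : ℝ) ≤ (t : ℝ) := by exact_mod_cast ht
        have : (0 : ℝ) ≤ (Δs : ℝ) := Nat.cast_nonneg _
        simp only [hsdef]; push_cast; linarith [show (1:ℝ) ≤ (t:ℝ) from by exact_mod_cast ht]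
      have hs2 : (2 : ℝ) ≤ s ^ υ := by
        refine le_trans hΔs (Real.rpow_le_rpow (by positivity) ?_ hυ0.le)
        have : (1 : ℝ) ≤ (t : ℝ) := by exact_mod_cast ht
        simp only [hsdef]; linarith
      have hspos : (0 : ℝ) < s := lt_of_lt_of_le one_pos hs1
      have hsu_pos : 0 < s ^ υ := Real.rpow_pos_of_pos hspos _
      have hhalf : s ^ (-υ) ≤ 1 / 2 := by
        rw [Real.rpow_neg hspos.le, inv_le_comm₀ hsu_pos (by norm_num)]
        linarith
      have hfac : 0 ≤ 1 - 2 * s ^ (-υ) := by linarith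
      have hm : s ^ (-υ) * s ^ (κ - υ) = s ^ (κ - 2 * υ) := by
        rw [← Real.rpow_add hspos]; ring_nf
      have hcast : ((t + 1 : ℕ) : ℝ) + (Δs : ℝ) = s + 1 := by
        simp only [hsdef]; push_cast; ring
      rw [hcast]
      calc a (t + 1) ≤ (1 - 2 * s ^ (-υ)) * a t + C * s ^ (κ - 2 * υ) := hrec t ht
        _ ≤ (1 - 2 * s ^ (-υ)) * (C * s ^ (κ - υ)) + C * s ^ (κ - 2 * υ) := by
            exact add_le_add (mul_le_mul_of_nonneg_left IH hfac) le_rfl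
        _ = C * (s ^ (κ - υ) - s ^ (κ - 2 * υ)) := by
            linear_combination (-2 * C) * hm
        _ ≤ C * (s + 1) ^ (κ - υ) :=
            mul_le_mul_of_nonneg_left
              (sgd_key υ κ hυ0 hυ1 hκ0 hκ s hs1 hs2) hC
  refine ⟨main, fun t ht => ?_⟩
  have ht1 : (1 : ℝ) ≤ (t : ℝ) := by exact_mod_cast ht
  have htpos : (0 : ℝ) < (t : ℝ) := by linarith
  refine le_trans (main t ht) (mul_le_mul_of_nonneg_left ?_ hC)
  exact Real.rpow_le_rpow_of_nonpos htpos (le_add_of_nonneg_right (Nat.cast_nonneg _)) (by linarith)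
end

section
/- Let (Ω, ℱ, ℙ) be a probability space, n ≥ 1 a natural number, B > 0, and let 𝔈₀ ⊇ 𝔈₁ ⊇ ⋯ ⊇ 𝔈ₙ be a decreasing family of events. Let G₀, …, Gₙ : Ω → ℝ be integrable random variables with |Gᵢ| ≤ B almost surely, and let w₀, …, w_{n−1} ≥ 0 be reals such that for every i < n, 𝔼[G_{i+1}·1_{𝔈_{i+1}}] − 𝔼[Gᵢ·1_{𝔈ᵢ}] ≤ −B·(ℙ(𝔈_{i+1}) − ℙ(𝔈ᵢ)) − wᵢ·ℙ(𝔈ᵢ). Then (Σ_{i<n} wᵢ)·ℙ(𝔈_{n−1}) ≤ 3B. -/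
/-!
The potential `Φᵢ = 𝔼[Gᵢ 1_{𝔈ᵢ}] + B ℙ(𝔈ᵢ)` drops by at least `wᵢ ℙ(𝔈ᵢ) ≥ wᵢ ℙ(𝔈_{n−1})` at each
step, while `|Gᵢ| ≤ B` keeps it in `[0, 2B]`; so the total drop `(Σ wᵢ) ℙ(𝔈_{n−1})` is at most `2B`.
-/

open MeasureTheory Finset

theorem antitoneOn_Iic_of_succ_le {α : Type*} [Preorder α] {f : ℕ → α} {n : ℕ}
    (hf : ∀ i < n, f (i + 1) ≤ f i) : AntitoneOn f (Set.Iic n) := by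
  intro a _ b hb hab
  induction b, hab using Nat.le_induction with
  | base => exact le_rfl
  | succ k _ ih => exact (hf k hb).trans (ih (Nat.le_of_succ_le hb))

theorem sum_range_le_sub_of_le_sub {α : Type*} [AddCommGroup α] [PartialOrder α]
    [IsOrderedAddMonoid α] {Φ d : ℕ → α} {n : ℕ} (h : ∀ i < n, Φ (i + 1) ≤ Φ i - d i) :
    ∑ i ∈ range n, d i ≤ Φ 0 - Φ n := by
  rw [← sum_range_sub' Φ n]
  exact sum_le_sum fun i hi => le_sub_comm.mp (h i (mem_range.mp hi))

theorem sum_mul_le_sum_mul_of_le {ι : Type*} {s : Finset ι} {w f : ι → ℝ} {c : ℝ}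
    (hw : ∀ i ∈ s, 0 ≤ w i) (hc : ∀ i ∈ s, c ≤ f i) :
    (∑ i ∈ s, w i) * c ≤ ∑ i ∈ s, w i * f i := by
  rw [sum_mul]
  exact sum_le_sum fun i hi => mul_le_mul_of_nonneg_left (hc i hi) (hw i hi)

theorem decrease_counting_argument_general
    {Ω : Type*} [MeasurableSpace Ω] (μ : Measure Ω) [IsProbabilityMeasure μ]
    (n : ℕ) (B : ℝ) (hB : 0 < B)
    (Ev : ℕ → Set Ω)
    (hdec : ∀ i, i < n → Ev (i + 1) ⊆ Ev i)
    (G : ℕ → Ω → ℝ)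
    (hGbd : ∀ i, i ≤ n → ∀ᵐ ω ∂μ, |G i ω| ≤ B)
    (w : ℕ → ℝ) (hw : ∀ i, i < n → 0 ≤ w i)
    (hstep : ∀ i, i < n →
      (∫ ω in Ev (i + 1), G (i + 1) ω ∂μ) - ∫ ω in Ev i, G i ω ∂μ
        ≤ -B * ((μ (Ev (i + 1))).toReal - (μ (Ev i)).toReal)
          - w i * (μ (Ev i)).toReal) :
    (∑ i ∈ Finset.range n, w i) * (μ (Ev (n - 1))).toReal ≤ 3 * B := by
  set p : ℕ → ℝ := fun i => (μ (Ev i)).toReal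
  have hp_anti : AntitoneOn p (Set.Iic n) := antitoneOn_Iic_of_succ_le fun i hi =>
    ENNReal.toReal_mono (measure_ne_top μ _) (measure_mono (hdec i hi))
  have hbound : ∀ i ≤ n, |∫ ω in Ev i, G i ω ∂μ| ≤ B * p i := fun i hi => by
    simpa only [Real.norm_eq_abs, measureReal_def] using norm_setIntegral_le_of_norm_le_const_ae
      (f := G i) (measure_lt_top μ (Ev i)) (ae_restrict_of_ae (hGbd i hi))
  have hdrop := sum_range_le_sub_of_le_sub (Φ := fun i => (∫ ω in Ev i, G i ω ∂μ) + B * p i)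
    (d := fun i => w i * p i) fun i hi => by linarith [hstep i hi]
  have hweighted : (∑ i ∈ range n, w i) * p (n - 1) ≤ ∑ i ∈ range n, w i * p i :=
    sum_mul_le_sum_mul_of_le (fun i hi => hw i (mem_range.mp hi)) fun i hi =>
      hp_anti (Set.mem_Iic.mpr (Nat.le_of_lt (mem_range.mp hi))) (Nat.sub_le n 1)
        (Nat.le_sub_one_of_lt (mem_range.mp hi))
  have hp0 : B * p 0 ≤ B := mul_le_of_le_one_right hB.le measureReal_le_one
  linarith [abs_le.mp (hbound 0 n.zero_le), abs_le.mp (hbound n le_rfl)]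

/-- Counting argument for entering the strongly convex region: for a decreasing family of
events `𝔈₀ ⊇ ⋯ ⊇ 𝔈ₙ`, bounded potentials `Gᵢ` and guaranteed decreases `wᵢ` satisfying
`𝔼[G_{i+1} 1_{𝔈_{i+1}}] − 𝔼[Gᵢ 1_{𝔈ᵢ}] ≤ −B(ℙ𝔈_{i+1} − ℙ𝔈ᵢ) − wᵢ ℙ𝔈ᵢ`,
we get `(Σ wᵢ) ℙ(𝔈_{n−1}) ≤ 3B`. -/
theorem decrease_counting_argument
    {Ω : Type*} [MeasurableSpace Ω] (μ : Measure Ω) [IsProbabilityMeasure μ]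
    (n : ℕ) (hn : 1 ≤ n) (B : ℝ) (hB : 0 < B)
    (Ev : ℕ → Set Ω) (hmeas : ∀ i, i ≤ n → MeasurableSet (Ev i))
    (hdec : ∀ i, i < n → Ev (i + 1) ⊆ Ev i)
    (G : ℕ → Ω → ℝ) (hGint : ∀ i, i ≤ n → Integrable (G i) μ)
    (hGbd : ∀ i, i ≤ n → ∀ᵐ ω ∂μ, |G i ω| ≤ B)
    (w : ℕ → ℝ) (hw : ∀ i, i < n → 0 ≤ w i)
    (hstep : ∀ i, i < n →
      (∫ ω in Ev (i + 1), G (i + 1) ω ∂μ) - ∫ ω in Ev i, G i ω ∂μ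
        ≤ -B * ((μ (Ev (i + 1))).toReal - (μ (Ev i)).toReal)
          - w i * (μ (Ev i)).toReal) :
    (∑ i ∈ Finset.range n, w i) * (μ (Ev (n - 1))).toReal ≤ 3 * B :=
  decrease_counting_argument_general μ n B hB Ev hdec G hGbd w hw hstep
end
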